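/- Let n ≥ 0, b_n = g_{n+2}/g_n, and let r_1,...,r_m, s_1,...,s_k be positive integers with Σr_i + b_n·Σs_i ≥ g_{n+2}. Then Σ_i (r_i + r_i/b_n) + Σ_j (s_j + s_j·b_n + 1) ≥ g_{n+2} + g_n, with the left side computed as a rational number; moreover equality forces k = 0 and Σr_i = g_{n+2}. -/
import Mathlib


/-- The odd-index Fibonacci numbers: 1, 1, 2, 5, 13, 34, ... -/
def g : ℕ → ℤ
  | 0 => 1
  | 1 => 1
  | n + 2 => 3 * g (n + 1) - g n

lemma g_aux : ∀ n, 1 ≤ g n ∧ g n ≤ g (n + 1) := by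
  intro n
  induction n with
  | zero => simp [g]
  | succ n ih =>
    obtain ⟨h1, h2⟩ := ih
    refine ⟨by linarith, ?_⟩
    show g (n + 1) ≤ 3 * g (n + 1) - g n
    linarith

theorem bottomid_estimate (n : ℕ) (m k : ℕ) (r : Fin m → ℤ) (s : Fin k → ℤ)
    (hr : ∀ i, 0 < r i) (hs : ∀ j, 0 < s j)
    (harea : ((∑ i, r i : ℤ) : ℚ) + ((g (n + 2) : ℚ) / (g n : ℚ)) * ((∑ j, s j : ℤ) : ℚ) ≥
      (g (n + 2) : ℚ)) :
    ((∑ i, ((r i : ℚ) + (r i : ℚ) / ((g (n + 2) : ℚ) / (g n : ℚ)))) +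
        ∑ j, ((s j : ℚ) + (s j : ℚ) * ((g (n + 2) : ℚ) / (g n : ℚ)) + 1) ≥
      (g (n + 2) : ℚ) + (g n : ℚ)) ∧
    ((∑ i, ((r i : ℚ) + (r i : ℚ) / ((g (n + 2) : ℚ) / (g n : ℚ)))) +
        ∑ j, ((s j : ℚ) + (s j : ℚ) * ((g (n + 2) : ℚ) / (g n : ℚ)) + 1) =
      (g (n + 2) : ℚ) + (g n : ℚ) → k = 0 ∧ (∑ i, r i) = g (n + 2)) := by
  have hgn : (1 : ℤ) ≤ g n := (g_aux n).1
  have hg2 : (1 : ℤ) ≤ g (n + 2) := (g_aux (n + 2)).1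
  set Gn : ℚ := (g n : ℚ) with hGndef
  set G2 : ℚ := (g (n + 2) : ℚ) with hG2def
  have hGn : 0 < Gn := by rw [hGndef]; exact_mod_cast lt_of_lt_of_le one_pos hgn
  have hG2 : 0 < G2 := by rw [hG2def]; exact_mod_cast lt_of_lt_of_le one_pos hg2
  set b : ℚ := G2 / Gn with hbdef
  have hb : 0 < b := div_pos hG2 hGn
  set Rq : ℚ := ((∑ i, r i : ℤ) : ℚ) with hRq
  set Sq : ℚ := ((∑ j, s j : ℤ) : ℚ) with hSq
  have hsum1 : (∑ i, ((r i : ℚ) + (r i : ℚ) / b)) = Rq + Rq / b := by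
    rw [Finset.sum_add_distrib, ← Finset.sum_div, hRq]
    push_cast
    ring
  have hsum2 : (∑ j, ((s j : ℚ) + (s j : ℚ) * b + 1)) = Sq + Sq * b + k := by
    rw [Finset.sum_add_distrib, Finset.sum_add_distrib, ← Finset.sum_mul, hSq]
    push_cast
    simp
  rw [hsum1, hsum2]
  have hG2b : G2 / b = Gn := by
    rw [hbdef]
    field_simp
  have h2 : Rq / b + Sq ≥ Gn := by
    have h := (div_le_div_iff_of_pos_right hb).mpr harea
    rw [hG2b, add_div, mul_comm, mul_div_assoc, div_self hb.ne', mul_one] at h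
    exact h
  have hc : Sq * b = b * Sq := mul_comm _ _
  have hk : (0 : ℚ) ≤ (k : ℚ) := Nat.cast_nonneg k
  constructor
  · linarith
  · intro heq
    have hkz : (k : ℚ) = 0 := by linarith
    have hk0 : k = 0 := by exact_mod_cast hkz
    subst hk0
    have hS0 : Sq = 0 := by rw [hSq]; simp
    have hb1 : b * Sq = 0 := by rw [hS0, mul_zero]
    have hb2 : Sq * b = 0 := by rw [hS0, zero_mul]
    have hR : Rq = G2 := by linarith
    refine ⟨rfl, ?_⟩
    have : ((∑ i, r i : ℤ) : ℚ) = ((g (n + 2) : ℤ) : ℚ) := hR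
    exact_mod_cast this
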